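/- arXiv:1405.5121 — 4 statements merged into one kernel-verified Lean document; each statement's English description precedes it below -/
import Mathlib

section
/- (Rota's convergence theorem, alternating form) Let P be a μ-preserving Markov operator on L²(μ) of a standard Borel probability space, arising from the kernel situation above, with adjoint P*. Then for the one-sided path system, (P̃*)ⁿ P̃ⁿ f converges in L²(μ̃⁻) to the conditional expectation E(f | Φ_{-∞}) onto the backwards tail σ-algebra Φ_{-∞} := ⋂_n Φ_{≤ -n}, for every f ∈ L²(μ̃⁻). -/
/-!
Stationarity makes the shift `R` that forgets the newest coordinate measure preserving, and `P̃`
is the adjoint of its Koopman operator: `∫_{R⁻¹C} f = ∫_C P̃ f`. Iterating, `(P̃ⁿ f) ∘ Rⁿ` is a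
version of the conditional expectation of `f` given `Φ_{≤ -n} = σ(Rⁿ)`. These σ-algebras decrease,
so the claim is reverse martingale convergence in `L²`: the conditional expectations are orthogonal
projections onto a decreasing sequence of closed subspaces, which converge strongly to the
projection onto their intersection, and that intersection is `L²` of the tail σ-algebra.
-/

open MeasureTheory ProbabilityTheory Filter Topology

/-- The Markov operator `P̃` on functions of backward paths (paths realized as `ℕ → X` via
`n ↦ x_{-n}`): it appends a new coordinate at time `0` sampled from `P(x_0, ·)` and averages. -/
noncomputable def appendOp {X : Type*} [MeasurableSpace X] (P : ProbabilityTheory.Kernel X X)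
    (g : (ℕ → X) → ℝ) : (ℕ → X) → ℝ :=
  fun y => ∫ z, g (fun n => if n = 0 then z else y (n - 1)) ∂(P (y 0))

theorem Submodule.starProjection_tendsto_iInf {𝕜 E : Type*} [RCLike 𝕜] [NormedAddCommGroup E]
    [InnerProductSpace 𝕜 E] [CompleteSpace E] {ι : Type*} [Preorder ι]
    (U : ι → Submodule 𝕜 E) [∀ i, (U i).HasOrthogonalProjection]
    [(⨅ i, U i).HasOrthogonalProjection] (hU : Antitone U) (x : E) :
    Tendsto (fun i => (U i).starProjection x) atTop (𝓝 ((⨅ i, U i).starProjection x)) := by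
  have hclosure : (⨆ i, (U i)ᗮ).topologicalClosure = (⨅ i, U i)ᗮ := by
    rw [← orthogonal_orthogonal_eq_closure, ← iInf_orthogonal]
    simp only [orthogonal_orthogonal]
  have hperp := starProjection_tendsto_closure_iSup (fun i => (U i)ᗮ)
    (fun i j hij => orthogonal_le (hU hij)) x
  simp only [hclosure, starProjection_orthogonal_val] at hperp
  simpa using (tendsto_const_nhds (x := x)).sub hperp

namespace MeasureTheory

variable {Ω : Type*} {m0 : MeasurableSpace Ω} {μ : Measure Ω}

-- limsup of the versions: `𝔪 N`-measurable for every `N` because it ignores the first `N` terms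
theorem AEStronglyMeasurable.iInf_of_antitone {𝔪 : ℕ → MeasurableSpace Ω} (h𝔪 : Antitone 𝔪)
    {h : Ω → ℝ} (hm : ∀ n, AEStronglyMeasurable[𝔪 n] h μ) :
    AEStronglyMeasurable[⨅ n, 𝔪 n] h μ := by
  set g : ℕ → Ω → ℝ := fun n => (hm n).mk h
  refine ⟨fun x => limsup (fun n => g n x) atTop, ?_, ?_⟩
  · refine Measurable.stronglyMeasurable fun s hs =>
      MeasurableSpace.measurableSet_iInf.2 fun N => ?_
    have htail : (fun x => limsup (fun n => g n x) atTop)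
        = fun x => limsup (fun n => g (n + N) x) atTop := by
      ext x; exact (limsup_nat_add (fun n => g n x) N).symm
    rw [htail]
    exact Measurable.limsup (fun n => ((hm (n + N)).stronglyMeasurable_mk.measurable).mono
      (h𝔪 (Nat.le_add_left N n)) le_rfl) hs
  · filter_upwards [ae_all_iff.2 fun n => (hm n).ae_eq_mk] with x hx
    simp only [g, ← hx, limsup_const]

theorem lpMeas_iInf_of_antitone {𝔪 : ℕ → MeasurableSpace Ω} (h𝔪 : Antitone 𝔪) (p : ENNReal) :
    lpMeas ℝ ℝ (⨅ n, 𝔪 n) p μ = ⨅ n, lpMeas ℝ ℝ (𝔪 n) p μ := by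
  ext F
  simp only [Submodule.mem_iInf, mem_lpMeas_iff_aestronglyMeasurable]
  exact ⟨fun hF n => hF.mono (iInf_le 𝔪 n), AEStronglyMeasurable.iInf_of_antitone h𝔪⟩

theorem tendsto_condExpL2_iInf [IsFiniteMeasure μ] {𝔪 : ℕ → MeasurableSpace Ω}
    (hle : ∀ n, 𝔪 n ≤ m0) (h𝔪 : Antitone 𝔪) (F : Lp ℝ 2 μ) :
    Tendsto (fun n => (condExpL2 ℝ ℝ (hle n) F : Lp ℝ 2 μ)) atTop
      (𝓝 (condExpL2 ℝ ℝ (iInf_le_of_le 0 (hle 0)) F : Lp ℝ 2 μ)) := by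
  have _ : ∀ n, Fact (𝔪 n ≤ m0) := fun n => ⟨hle n⟩
  have _ : Fact ((⨅ n, 𝔪 n) ≤ m0) := ⟨iInf_le_of_le 0 (hle 0)⟩
  have _ : (⨅ n, lpMeas ℝ ℝ (𝔪 n) 2 μ).HasOrthogonalProjection := by
    rw [← lpMeas_iInf_of_antitone h𝔪]; infer_instance
  have := Submodule.starProjection_tendsto_iInf (fun n => lpMeas ℝ ℝ (𝔪 n) 2 μ)
    (fun n k hnk F hF => mem_lpMeas_iff_aestronglyMeasurable.2
      ((mem_lpMeas_iff_aestronglyMeasurable.1 hF).mono (h𝔪 hnk))) F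
  convert this using 2
  · rfl
  refine (Submodule.eq_starProjection_of_mem_orthogonal ?_ ?_).symm
  · rw [← lpMeas_iInf_of_antitone h𝔪]; exact (condExpL2 ℝ ℝ _ F).2
  · rw [← lpMeas_iInf_of_antitone h𝔪]; exact Submodule.sub_starProjection_mem_orthogonal F

theorem tendsto_eLpNorm_condExp_sub_condExp_iInf [IsFiniteMeasure μ]
    {𝔪 : ℕ → MeasurableSpace Ω} (hle : ∀ n, 𝔪 n ≤ m0) (h𝔪 : Antitone 𝔪) {f : Ω → ℝ}
    (hf : MemLp f 2 μ) :
    Tendsto (fun n => eLpNorm (μ[f|𝔪 n] - μ[f|⨅ n, 𝔪 n]) 2 μ) atTop (𝓝 0) := by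
  have := (Lp.tendsto_Lp_iff_tendsto_eLpNorm' _ _).1 (tendsto_condExpL2_iInf hle h𝔪 (hf.toLp f))
  refine this.congr fun n => eLpNorm_congr_ae ?_
  exact (hf.condExpL2_ae_eq_condExp (hle n)).sub
    (hf.condExpL2_ae_eq_condExp (iInf_le_of_le 0 (hle 0)))

end MeasureTheory

namespace BackwardPath

variable {X : Type*}

def shift (n : ℕ) (y : ℕ → X) : ℕ → X := fun k => y (k + n)

def cons (z : X) (y : ℕ → X) : ℕ → X := fun n => if n = 0 then z else y (n - 1)

variable [MeasurableSpace X]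

theorem measurable_shift (n : ℕ) : Measurable (shift (X := X) n) :=
  measurable_pi_lambda _ fun _ => measurable_pi_apply _

theorem measurable_cons_uncurry : Measurable fun p : (ℕ → X) × X => cons p.2 p.1 := by
  refine measurable_pi_lambda _ fun n => ?_
  rcases n with _ | n
  · exact measurable_snd
  · exact (measurable_pi_apply n).comp measurable_fst

theorem antitone_comap_shift :
    Antitone fun n => MeasurableSpace.comap (shift (X := X) n) inferInstance := by
  intro n m hnm
  have hcomp : shift (X := X) m = shift (m - n) ∘ shift n := by
    funext y k
    simp only [shift, Function.comp_apply]
    congr 1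
    omega
  simp only [hcomp, ← MeasurableSpace.comap_comp]
  exact MeasurableSpace.comap_mono (measurable_shift (m - n)).comap_le

variable (P : Kernel X X)

noncomputable def headKernel : Kernel (ℕ → X) X := P.comap (· 0) (measurable_pi_apply 0)

theorem appendOp_apply (g : (ℕ → X) → ℝ) (y : ℕ → X) :
    appendOp P g y = ∫ z, g (cons z y) ∂headKernel P y := rfl

def IsStationary (μ : Measure (ℕ → X)) : Prop :=
  μ.bind (fun y => (P (y 0)).map (cons · y)) = μ

variable [IsMarkovKernel P]

instance : IsMarkovKernel (headKernel P) := by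
  unfold headKernel; infer_instance

theorem measurable_appendOp {g : (ℕ → X) → ℝ} (hg : Measurable g) :
    Measurable (appendOp P g) :=
  ((hg.comp measurable_cons_uncurry).stronglyMeasurable.integral_kernel_prod_right'
    (κ := headKernel P)).measurable

theorem measurable_appendOp_iterate {g : (ℕ → X) → ℝ} (hg : Measurable g) (n : ℕ) :
    Measurable ((appendOp P)^[n] g) := by
  induction n with
  | zero => exact hg
  | succ n ih => rw [Function.iterate_succ_apply']; exact measurable_appendOp P ih

variable {P} {μ : Measure (ℕ → X)} [IsFiniteMeasure μ]

theorem IsStationary.map_cons_compProd (h : IsStationary P μ) :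
    (μ ⊗ₘ headKernel P).map (fun p => cons p.2 p.1) = μ := by
  have hcons (y : ℕ → X) : Measurable (cons · y) :=
    measurable_cons_uncurry.comp measurable_prodMk_left
  have hmeas : Measurable fun y => (P (y 0)).map (cons · y) := by
    refine Measure.measurable_of_measurable_coe _ fun s hs => ?_
    simp_rw [Measure.map_apply (hcons _) hs]
    exact Kernel.measurable_kernel_prodMk_left (κ := headKernel P) (measurable_cons_uncurry hs)
  conv_rhs => rw [← h]
  ext s hs
  rw [Measure.map_apply measurable_cons_uncurry hs, Measure.compProd_apply
    (measurable_cons_uncurry hs), Measure.bind_apply hs hmeas.aemeasurable]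
  refine lintegral_congr fun y => ?_
  rw [Measure.map_apply (hcons y) hs]
  rfl

theorem IsStationary.measurePreserving_shift (h : IsStationary P μ) :
    ∀ n, MeasurePreserving (shift n) μ μ
  | 0 => MeasurePreserving.id μ
  | n + 1 => by
    refine (h.measurePreserving_shift n).comp ⟨measurable_shift 1, ?_⟩
    conv_lhs => rw [← h.map_cons_compProd]
    rw [Measure.map_map (measurable_shift 1) measurable_cons_uncurry]
    exact Measure.fst_compProd μ _

theorem IsStationary.integrable_comp_cons (h : IsStationary P μ) {f : (ℕ → X) → ℝ}
    (hfi : Integrable f μ) :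
    Integrable (fun p => f (cons p.2 p.1)) (μ ⊗ₘ headKernel P) := by
  rw [← h.map_cons_compProd] at hfi
  exact hfi.comp_measurable measurable_cons_uncurry

theorem IsStationary.integrable_appendOp (h : IsStationary P μ) {f : (ℕ → X) → ℝ}
    (hf : Measurable f) (hfi : Integrable f μ) : Integrable (appendOp P f) μ := by
  have hnorm := ((Measure.integrable_compProd_iff
    (hf.comp measurable_cons_uncurry).aestronglyMeasurable).1 (h.integrable_comp_cons hfi)).2
  refine hnorm.mono (measurable_appendOp P hf).aestronglyMeasurable
    (Eventually.of_forall fun y => ?_)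
  exact (norm_integral_le_integral_norm _).trans (le_abs_self _)

theorem IsStationary.integrable_appendOp_iterate (h : IsStationary P μ) {f : (ℕ → X) → ℝ}
    (hf : Measurable f) (hfi : Integrable f μ) (n : ℕ) : Integrable ((appendOp P)^[n] f) μ := by
  induction n with
  | zero => exact hfi
  | succ n ih =>
    rw [Function.iterate_succ_apply']
    exact h.integrable_appendOp (measurable_appendOp_iterate P hf n) ih

theorem IsStationary.setIntegral_preimage_shift_one (h : IsStationary P μ) {f : (ℕ → X) → ℝ}
    (hf : Measurable f) (hfi : Integrable f μ) {C : Set (ℕ → X)} (hC : MeasurableSet C) :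
    ∫ y in shift 1 ⁻¹' C, f y ∂μ = ∫ y in C, appendOp P f y ∂μ := by
  calc ∫ y in shift 1 ⁻¹' C, f y ∂μ
      = ∫ y in shift 1 ⁻¹' C, f y ∂(μ ⊗ₘ headKernel P).map (fun p => cons p.2 p.1) := by
        rw [h.map_cons_compProd]
    _ = ∫ p in C ×ˢ Set.univ, f (cons p.2 p.1) ∂(μ ⊗ₘ headKernel P) := by
        rw [setIntegral_map (measurable_shift 1 hC) hf.aestronglyMeasurable
          measurable_cons_uncurry.aemeasurable, Set.prod_univ]
        rfl
    _ = ∫ y in C, appendOp P f y ∂μ := by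
        rw [Measure.setIntegral_compProd hC MeasurableSet.univ
          (h.integrable_comp_cons hfi).integrableOn]
        simp only [Measure.restrict_univ, appendOp_apply]

theorem IsStationary.setIntegral_preimage_shift (h : IsStationary P μ) (n : ℕ) {f : (ℕ → X) → ℝ}
    (hf : Measurable f) (hfi : Integrable f μ) {C : Set (ℕ → X)} (hC : MeasurableSet C) :
    ∫ y in shift n ⁻¹' C, f y ∂μ = ∫ y in C, (appendOp P)^[n] f y ∂μ := by
  induction n generalizing f with
  | zero => rfl
  | succ n ih =>
    rw [Function.iterate_succ_apply,
      ← ih (measurable_appendOp P hf) (h.integrable_appendOp hf hfi)]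
    exact h.setIntegral_preimage_shift_one hf hfi (measurable_shift n hC)

theorem IsStationary.appendOp_iterate_comp_shift_ae_eq_condExp (h : IsStationary P μ)
    {f : (ℕ → X) → ℝ} (hf : Measurable f) (hfi : Integrable f μ) (n : ℕ) :
    (fun y => (appendOp P)^[n] f (shift n y)) =ᵐ[μ]
      μ[f | MeasurableSpace.comap (shift n) inferInstance] := by
  have hmp := h.measurePreserving_shift n
  refine ae_eq_condExp_of_forall_setIntegral_eq (measurable_shift n).comap_le hfi
    (fun s _ _ => ?_) ?_ ?_
  · exact (hmp.integrable_comp_of_integrable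
      (h.integrable_appendOp_iterate hf hfi n)).integrableOn
  · rintro s ⟨C, hC, rfl⟩ _
    rw [h.setIntegral_preimage_shift n hf hfi hC]
    conv_rhs => rw [← hmp.map_eq]
    exact (setIntegral_map hC (measurable_appendOp_iterate P hf n).aestronglyMeasurable
      hmp.measurable.aemeasurable).symm
  · exact ((measurable_appendOp_iterate P hf n).comp (comap_measurable _)).aestronglyMeasurable

end BackwardPath

theorem rota_alternating_convergence_general
    {X : Type*} [MeasurableSpace X]
    (P : Kernel X X) [IsMarkovKernel P]
    (μm : Measure (ℕ → X)) [IsProbabilityMeasure μm]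
    (hMarkov : μm.bind (fun y =>
        (P (y 0)).map (fun z => fun n => if n = 0 then z else y (n - 1))) = μm)
    (f : (ℕ → X) → ℝ) (hf : Measurable f) (hf2 : MemLp f 2 μm) :
    Tendsto (fun n : ℕ =>
        eLpNorm (fun y : ℕ → X =>
            ((appendOp P)^[n] f) (fun k => y (k + n)) -
              (μm[f | ⨅ n : ℕ, MeasurableSpace.comap
                  (fun y : ℕ → X => fun k : ℕ => y (k + n)) inferInstance]) y)
          2 μm)
      atTop (nhds 0) := by
  have hstat : BackwardPath.IsStationary P μm := hMarkov
  have hcondExp := hstat.appendOp_iterate_comp_shift_ae_eq_condExp hf (hf2.integrable one_le_two)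
  have hmartingale := tendsto_eLpNorm_condExp_sub_condExp_iInf
    (fun n => (BackwardPath.measurable_shift n).comap_le) BackwardPath.antitone_comap_shift hf2
  exact hmartingale.congr fun n => eLpNorm_congr_ae ((hcondExp n).symm.sub EventuallyEq.rfl)

/-- Rota's alternating convergence theorem: for the one-sided stationary Markov system, with
`P̃` the appending Markov operator and `P̃* = (Koopman operator of R)` its adjoint, the operators
`(P̃*)ⁿ P̃ⁿ f = (P̃ⁿ f) ∘ Rⁿ` converge in `L²(μ̃⁻)` to the conditional expectation of `f` onto the
backwards tail σ-algebra `Φ_{-∞} = ⋂_n Φ_{≤ -n}`, for every `f ∈ L²(μ̃⁻)`. -/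
theorem rota_alternating_convergence
    {X : Type*} [MeasurableSpace X] [StandardBorelSpace X]
    (P : Kernel X X) [IsMarkovKernel P]
    (μm : Measure (ℕ → X)) [IsProbabilityMeasure μm]
    (hMarkov : μm.bind (fun y =>
        (P (y 0)).map (fun z => fun n => if n = 0 then z else y (n - 1))) = μm)
    (f : (ℕ → X) → ℝ) (hf : Measurable f) (hf2 : MemLp f 2 μm) :
    Tendsto (fun n : ℕ =>
        eLpNorm (fun y : ℕ → X =>
            ((appendOp P)^[n] f) (fun k => y (k + n)) -
              (μm[f | ⨅ n : ℕ, MeasurableSpace.comap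
                  (fun y : ℕ → X => fun k : ℕ => y (k + n)) inferInstance]) y)
          2 μm)
      atTop (nhds 0) :=
  rota_alternating_convergence_general P μm hMarkov f hf hf2
end

section
/- Let S and T be commuting invertible μ-preserving transformations of a standard probability space (X, μ), and P(x, ·) := ½(δ_{Sx} + δ_{Tx}). Then for every f ∈ L¹(μ), ‖Pⁿf − E(f | Λ) ∘ Tⁿ‖₁ → 0 as n → ∞, where Λ is the σ-algebra of S⁻¹T-invariant sets. Here Pⁿf = 2⁻ⁿ Σ_{p+q=n} C(n,p) S^p T^q f (with S, T acting as Koopman operators). -/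
/-!
Write `R = T⁻¹S`. Since `SᵖT^{n-p} = Rᵖ Tⁿ`, the function `Pⁿf` is `(2⁻ⁿ ∑ₚ C(n,p) f ∘ Rᵖ) ∘ Tⁿ`,
`Tⁿ` preserves the `L¹` norm, and `Λ` is also the σ-algebra of `R`-invariant sets; so it suffices to
show that the binomial averages `2⁻ⁿ ∑ₚ C(n,p) f ∘ Rᵖ` converge to `E(f | Λ)` in `L¹`.

These averages are `Lᵖ` contractions fixing `Λ`-measurable functions. On a coboundary `g ∘ R - g`
summation by parts gives the bound `2⁻ⁿ ∑ₚ |C(n,p-1) - C(n,p)| ‖g‖ = 2 C(n,⌊n/2⌋) 2⁻ⁿ ‖g‖`, which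
tends to `0` by Wallis' formula: this is the concentration of the binomial distribution. Finally,
every `u` with `E(u | Λ) = 0` is an `L¹` limit of coboundaries: in `L²`, a vector orthogonal to the
fixed points of the Koopman operator `U` (the a.e. `Λ`-measurable functions) lies in the closure of
the range of `U - 1`, and `L²` is dense in `L¹`.
-/

open Filter Finset MeasureTheory
open scoped ENNReal Topology Nat
open MeasurableSpace (invariants invariants_le)

theorem Nat.choose_succ_le_of_half_le {n r : ℕ} (h : n / 2 ≤ r) :
    n.choose (r + 1) ≤ n.choose r := by
  refine Nat.le_of_mul_le_mul_right ?_ r.succ_pos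
  rw [Nat.choose_succ_right_eq]
  exact Nat.mul_le_mul_left _ (by omega)

theorem sum_range_abs_sub_of_unimodal {a : ℕ → ℝ} {m N : ℕ} (hmN : m ≤ N)
    (hmono : ∀ i < m, a i ≤ a (i + 1)) (hanti : ∀ i, m ≤ i → i < N → a (i + 1) ≤ a i) :
    ∑ i ∈ range N, |a (i + 1) - a i| = 2 * a m - a 0 - a N := by
  have hup : ∑ i ∈ range m, |a (i + 1) - a i| = a m - a 0 := by
    rw [← sum_range_sub]
    exact sum_congr rfl fun i hi => abs_of_nonneg (sub_nonneg.2 (hmono i (mem_range.1 hi)))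
  have hdown : ∑ i ∈ Ico m N, |a (i + 1) - a i| = a m - a N := by
    rw [← neg_sub, ← sum_Ico_sub _ hmN, ← sum_neg_distrib]
    refine sum_congr rfl fun i hi => abs_of_nonpos (sub_nonpos.2 ?_)
    exact hanti i (mem_Ico.1 hi).1 (mem_Ico.1 hi).2
  rw [← sum_range_add_sum_Ico _ hmN, hup, hdown]
  ring

theorem sum_range_abs_choose_succ_sub_two_mul_choose (n : ℕ) :
    ∑ p ∈ range (n + 2), |((n + 1).choose p : ℝ) - 2 * n.choose p| = 2 * n.choose (n / 2) := by
  have hunimodal := sum_range_abs_sub_of_unimodal (a := fun p => (n.choose p : ℝ))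
    (m := n / 2) (N := n + 1) (by omega)
    (fun i hi => by exact_mod_cast Nat.choose_le_succ_of_lt_half_left hi)
    (fun i hi _ => by exact_mod_cast Nat.choose_succ_le_of_half_le hi)
  have hshift (p : ℕ) : |((n + 1).choose (p + 1) : ℝ) - 2 * n.choose (p + 1)| =
      |(n.choose (p + 1) : ℝ) - n.choose p| := by
    rw [Nat.choose_succ_succ', Nat.cast_add, abs_sub_comm]
    ring_nf
  rw [sum_range_succ', sum_congr rfl fun p _ => hshift p, hunimodal]
  norm_num

/-- Summation by parts: by Pascal's rule the coefficient of `x p` is `C(n, p - 1) - C(n, p)`. -/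
theorem sum_range_choose_mul_sub {R : Type*} [CommRing R] (x : ℕ → R) (n : ℕ) :
    ∑ p ∈ range (n + 1), (n.choose p : R) * (x (p + 1) - x p) =
      ∑ p ∈ range (n + 2), (((n + 1).choose p : R) - 2 * n.choose p) * x p := by
  have hlower : ∑ p ∈ range (n + 1), (n.choose p : R) * x p =
      ∑ p ∈ range (n + 1), (n.choose (p + 1) : R) * x (p + 1) + x 0 := by
    rw [sum_range_succ', sum_range_succ (fun p => (n.choose (p + 1) : R) * x (p + 1))]
    simp
  simp only [mul_sub, sum_sub_distrib]
  rw [hlower, sum_range_succ' _ (n + 1)]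
  simp only [Nat.choose_succ_succ', Nat.cast_add, add_mul, sub_mul, sum_add_distrib,
    sum_sub_distrib, Nat.choose_zero_right, Nat.cast_one, mul_assoc, ← mul_sum]
  ring

theorem sq_centralBinom_div_four_pow (k : ℕ) :
    ((k.centralBinom : ℝ) / 4 ^ k) ^ 2 = ((2 * k + 1) * Real.Wallis.W k)⁻¹ := by
  have hfact : (k.centralBinom : ℝ) * k ! * k ! = (2 * k)! := by
    have := Nat.choose_mul_factorial_mul_factorial (n := 2 * k) (k := k) (by omega)
    rw [show 2 * k - k = k by omega] at this
    exact_mod_cast this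
  have h4 : (4 : ℝ) ^ k = 2 ^ (2 * k) := by rw [pow_mul]; norm_num
  rw [Real.Wallis.W_eq_factorial_ratio, ← hfact, h4]
  have : (k ! : ℝ) ≠ 0 := by positivity
  field_simp
  ring

theorem tendsto_centralBinom_div_four_pow :
    Tendsto (fun k : ℕ => (k.centralBinom : ℝ) / 4 ^ k) atTop (𝓝 0) := by
  have hW : Tendsto (fun k : ℕ => (2 * k + 1) * Real.Wallis.W k) atTop atTop :=
    (tendsto_atTop_add_const_right _ 1
      (tendsto_natCast_atTop_atTop.const_mul_atTop two_pos)).atTop_mul_pos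
        (by positivity) Real.Wallis.tendsto_W_nhds_pi_div_two
  have hsq := (tendsto_inv_atTop_zero.comp hW).sqrt
  rw [Real.sqrt_zero] at hsq
  refine hsq.congr fun k => ?_
  simp only [Function.comp_apply, ← sq_centralBinom_div_four_pow]
  exact Real.sqrt_sq (by positivity)

theorem choose_half_div_two_pow_eq_centralBinom (n : ℕ) :
    (n.choose (n / 2) : ℝ) / 2 ^ n = ((n + 1) / 2).centralBinom / 4 ^ ((n + 1) / 2) := by
  obtain ⟨k, rfl | rfl⟩ := Nat.even_or_odd' n
  · rw [show (2 * k + 1) / 2 = k by omega, show 2 * k / 2 = k by omega,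
      Nat.centralBinom_eq_two_mul_choose, pow_mul]
    norm_num
  · rw [show (2 * k + 1 + 1) / 2 = k + 1 by omega, show (2 * k + 1) / 2 = k by omega,
      Nat.centralBinom_eq_two_mul_choose, show 2 * (k + 1) = 2 * k + 1 + 1 by ring,
      Nat.choose_succ_succ, ← Nat.choose_symm_half, pow_succ, pow_mul]
    push_cast
    field_simp
    ring

theorem tendsto_choose_half_div_two_pow :
    Tendsto (fun n : ℕ => (n.choose (n / 2) : ℝ) / 2 ^ n) atTop (𝓝 0) := by
  simp only [choose_half_div_two_pow_eq_centralBinom]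
  exact tendsto_centralBinom_div_four_pow.comp
    (tendsto_atTop_atTop.2 fun b => ⟨2 * b, fun n hn => by omega⟩)

theorem ContinuousLinearMap.mem_closure_range_sub_self_of_mem_orthogonal_eqLocus
    {𝕜 E : Type*} [RCLike 𝕜] [NormedAddCommGroup E] [InnerProductSpace 𝕜 E] [CompleteSpace E]
    {U : E →L[𝕜] E} (hU : ‖U‖ ≤ 1) {x : E} (hx : x ∈ (U.eqLocus 1)ᗮ) :
    x ∈ closure (Set.range fun y => U y - y) := by
  have hrange : (LinearMap.range ((U : E →ₗ[𝕜] E) - 1) : Set E) = Set.range fun y => U y - y := by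
    ext z; simp
  rw [← hrange, ← Submodule.topologicalClosure_coe, ← Submodule.orthogonal_orthogonal_eq_closure]
  refine Submodule.orthogonal_le (fun y hy => ?_) hx
  -- A contraction fixes every `y` with `⟪U y, y⟫ = ‖y‖²`.
  refine eq_of_norm_le_re_inner_eq_norm_sq (𝕜 := 𝕜) ?_ ?_
  · simpa using U.le_of_opNorm_le hU y
  · have : ∀ z, inner 𝕜 (U z) y = inner 𝕜 z y := by
      simpa [Submodule.mem_orthogonal, inner_sub_left, sub_eq_zero] using hy
    simp [this]

theorem condExp_sub_condExp_ae_eq_zero {α : Type*} {m m₀ : MeasurableSpace α} {μ : Measure[m₀] α}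
    (hm : m ≤ m₀) [SigmaFinite (μ.trim hm)] {f : α → ℝ} (hf : Integrable f μ) :
    μ[f - μ[f | m] | m] =ᵐ[μ] 0 := by
  filter_upwards [condExp_sub hf integrable_condExp m] with x hx
  rw [hx, condExp_of_stronglyMeasurable hm stronglyMeasurable_condExp integrable_condExp,
    Pi.sub_apply, sub_self, Pi.zero_apply]

theorem MeasurableSpace.invariants_equiv_symm {α : Type*} [MeasurableSpace α] (e : α ≃ α) :
    invariants e.symm = invariants e := by
  have key (e : α ≃ α) (s : Set α) (h : e ⁻¹' s = s) : e.symm ⁻¹' s = s :=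
    calc e.symm ⁻¹' s = e.symm ⁻¹' (e ⁻¹' s) := by rw [h]
      _ = s := e.symm_preimage_preimage s
  ext s
  simp only [measurableSet_invariants]
  exact and_congr_right fun _ => ⟨fun h => by simpa using key e.symm s h, key e s⟩

theorem Equiv.iterate_apply_iterate_sub {α : Type*} (S T : α ≃ α) (hST : Function.Commute S T)
    {n p : ℕ} (hp : p ≤ n) (x : α) :
    S^[p] (T^[n - p] x) = (fun y => T.symm (S y))^[p] (T^[n] x) := by
  set R := fun y => T.symm (S y)
  have hRT : Function.Commute R T := fun y => by simp [R, hST y]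
  have hS : ⇑S = R ∘ T := funext fun y => by simp [R, hST y]
  rw [hS, hRT.comp_iterate, Function.comp_apply, ← Function.iterate_add_apply,
    Nat.add_sub_cancel' hp]

section BinomialAverage

variable {X : Type*} {R : X → X}

/-- `Pⁿ f` for the Markov operator `P f = (f + f ∘ R) / 2`. -/
noncomputable def binomialAverage (R : X → X) (f : X → ℝ) (n : ℕ) (x : X) : ℝ :=
  (2 ^ n)⁻¹ * ∑ p ∈ range (n + 1), (n.choose p : ℝ) * f (R^[p] x)

theorem binomialAverage_sub (R : X → X) (f g : X → ℝ) (n : ℕ) :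
    binomialAverage R (f - g) n = binomialAverage R f n - binomialAverage R g n := by
  ext x
  simp only [binomialAverage, Pi.sub_apply, mul_sub, sum_sub_distrib]

theorem binomialAverage_of_comp_eq {g : X → ℝ} (hg : g ∘ R = g) (n : ℕ) :
    binomialAverage R g n = g := by
  have hiter (p : ℕ) (x : X) : g (R^[p] x) = g x :=
    congrFun (Function.iterate_invariant hg p) x
  ext x
  simp only [binomialAverage, hiter, ← sum_mul]
  rw [← Nat.cast_sum, Nat.sum_range_choose, Nat.cast_pow, Nat.cast_ofNat]
  field_simp

theorem binomialAverage_eq_sum (R : X → X) (f : X → ℝ) (n : ℕ) :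
    binomialAverage R f n = fun x => ∑ p ∈ range (n + 1), (2 ^ n)⁻¹ * n.choose p * f (R^[p] x) := by
  ext x
  simp only [binomialAverage, mul_sum, mul_assoc]

variable [MeasurableSpace X] {μ : Measure X}

theorem eLpNorm_sum_mul_comp_iterate_le (hR : MeasurePreserving R μ μ) {g : X → ℝ}
    (hg : AEStronglyMeasurable g μ) {p : ℝ≥0∞} (hp : 1 ≤ p) (s : Finset ℕ) (a : ℕ → ℝ) :
    eLpNorm (fun x => ∑ i ∈ s, a i * g (R^[i] x)) p μ ≤
      ENNReal.ofReal (∑ i ∈ s, |a i|) * eLpNorm g p μ := by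
  have hcomp (i : ℕ) : AEStronglyMeasurable (g ∘ R^[i]) μ :=
    hg.comp_measurePreserving (hR.iterate i)
  calc eLpNorm (fun x => ∑ i ∈ s, a i * g (R^[i] x)) p μ
      = eLpNorm (∑ i ∈ s, a i • (g ∘ R^[i])) p μ := by
        congr 1; ext x; simp
    _ ≤ ∑ i ∈ s, eLpNorm (a i • (g ∘ R^[i])) p μ :=
        eLpNorm_sum_le (fun i _ => (hcomp i).const_smul _) hp
    _ = ∑ i ∈ s, ENNReal.ofReal |a i| * eLpNorm g p μ := by
        refine sum_congr rfl fun i _ => ?_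
        rw [eLpNorm_const_smul, eLpNorm_comp_measurePreserving hg (hR.iterate i),
          Real.enorm_eq_ofReal_abs]
    _ = ENNReal.ofReal (∑ i ∈ s, |a i|) * eLpNorm g p μ := by
        rw [← sum_mul, ENNReal.ofReal_sum_of_nonneg fun i _ => abs_nonneg _]

theorem MeasureTheory.AEStronglyMeasurable.binomialAverage
    (hR : Measure.QuasiMeasurePreserving R μ μ) {f : X → ℝ} (hf : AEStronglyMeasurable f μ) (n : ℕ) :
    AEStronglyMeasurable (binomialAverage R f n) μ := by
  rw [binomialAverage_eq_sum]
  exact Finset.aestronglyMeasurable_fun_sum _ fun p _ =>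
    (hf.comp_quasiMeasurePreserving (hR.iterate p)).const_mul _

theorem eLpNorm_binomialAverage_le (hR : MeasurePreserving R μ μ) {f : X → ℝ}
    (hf : AEStronglyMeasurable f μ) {p : ℝ≥0∞} (hp : 1 ≤ p) (n : ℕ) :
    eLpNorm (binomialAverage R f n) p μ ≤ eLpNorm f p μ := by
  have hweights : ∑ i ∈ range (n + 1), |(2 ^ n)⁻¹ * (n.choose i : ℝ)| = 1 := by
    rw [sum_congr rfl fun i _ => abs_of_nonneg (by positivity), ← mul_sum, ← Nat.cast_sum,
      Nat.sum_range_choose, Nat.cast_pow, Nat.cast_ofNat, inv_mul_cancel₀ (by positivity)]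
  have := eLpNorm_sum_mul_comp_iterate_le hR hf hp (range (n + 1))
    (fun i => (2 ^ n)⁻¹ * (n.choose i : ℝ))
  rwa [hweights, ENNReal.ofReal_one, one_mul, ← binomialAverage_eq_sum] at this

theorem eLpNorm_binomialAverage_coboundary_le (hR : MeasurePreserving R μ μ) {g : X → ℝ}
    (hg : AEStronglyMeasurable g μ) {p : ℝ≥0∞} (hp : 1 ≤ p) (n : ℕ) :
    eLpNorm (binomialAverage R (g ∘ R - g) n) p μ ≤
      ENNReal.ofReal (2 * n.choose (n / 2) / 2 ^ n) * eLpNorm g p μ := by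
  have hsum : binomialAverage R (g ∘ R - g) n = fun x => ∑ i ∈ range (n + 2),
      (2 ^ n)⁻¹ * (((n + 1).choose i : ℝ) - 2 * n.choose i) * g (R^[i] x) := by
    ext x
    have := sum_range_choose_mul_sub (fun i => g (R^[i] x)) n
    simp only [binomialAverage, Pi.sub_apply, Function.comp_apply, mul_assoc, ← mul_sum,
      ← this, ← Function.iterate_succ_apply' R]
  have hweights : ∑ i ∈ range (n + 2), |(2 ^ n)⁻¹ * (((n + 1).choose i : ℝ) - 2 * n.choose i)| =
      2 * n.choose (n / 2) / 2 ^ n := by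
    simp only [abs_mul, abs_inv, abs_pow, abs_two, ← mul_sum,
      sum_range_abs_choose_succ_sub_two_mul_choose]
    ring
  rw [hsum, ← hweights]
  exact eLpNorm_sum_mul_comp_iterate_le hR hg hp _ _

theorem tendsto_eLpNorm_binomialAverage_of_forall_coboundary_lt (hR : MeasurePreserving R μ μ)
    {p : ℝ≥0∞} (hp : 1 ≤ p) {u : X → ℝ} (hu : AEStronglyMeasurable u μ)
    (happrox : ∀ ε > 0, ∃ g, MemLp g p μ ∧ eLpNorm (u - (g ∘ R - g)) p μ < ε) :
    Tendsto (fun n => eLpNorm (binomialAverage R u n) p μ) atTop (𝓝 0) := by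
  refine ENNReal.tendsto_nhds_zero.2 fun ε hε => ?_
  obtain ⟨g, hg, hug⟩ := happrox (ε / 2) (ENNReal.half_pos hε.ne')
  have hcob : AEStronglyMeasurable (g ∘ R - g) μ :=
    (hg.1.comp_measurePreserving hR).sub hg.1
  have hdecay : Tendsto (fun n : ℕ => ENNReal.ofReal (2 * n.choose (n / 2) / 2 ^ n) * eLpNorm g p μ)
      atTop (𝓝 0) := by
    have := ENNReal.Tendsto.mul_const
      (ENNReal.tendsto_ofReal (tendsto_choose_half_div_two_pow.const_mul 2)) (Or.inr hg.2.ne)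
    simpa [mul_div_assoc] using this
  filter_upwards [ENNReal.tendsto_nhds_zero.1 hdecay (ε / 2) (ENNReal.half_pos hε.ne')] with n hn
  calc eLpNorm (binomialAverage R u n) p μ
      ≤ eLpNorm (binomialAverage R (u - (g ∘ R - g)) n) p μ +
          eLpNorm (binomialAverage R (g ∘ R - g) n) p μ := by
        rw [← sub_add_cancel (binomialAverage R u n) (binomialAverage R (g ∘ R - g) n),
          ← binomialAverage_sub]
        exact eLpNorm_add_le ((hu.sub hcob).binomialAverage hR.quasiMeasurePreserving n)
          (hcob.binomialAverage hR.quasiMeasurePreserving n) hp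
    _ ≤ ε / 2 + ε / 2 := add_le_add
        ((eLpNorm_binomialAverage_le hR (hu.sub hcob) hp n).trans hug.le)
        ((eLpNorm_binomialAverage_coboundary_le hR hg.1 hp n).trans hn)
    _ = ε := ENNReal.add_halves ε

theorem aestronglyMeasurable_invariants_of_comp_ae_eq (hR : Measure.QuasiMeasurePreserving R μ μ)
    {v : X → ℝ} (hv : AEStronglyMeasurable v μ) (hvR : v ∘ R =ᵐ[μ] v) :
    AEStronglyMeasurable[invariants R] v μ := by
  obtain ⟨v₀, hv₀, hvv₀⟩ := hv
  have hv₀R : v₀ ∘ R =ᵐ[μ] v₀ :=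
    (hR.ae_eq_comp hvv₀.symm).trans (hvR.trans hvv₀)
  have hiter (n : ℕ) : v₀ ∘ R^[n] =ᵐ[μ] v₀ := by
    induction n with
    | zero => rfl
    | succ n ih =>
      rw [Function.iterate_succ, ← Function.comp_assoc]
      exact (hR.ae_eq_comp ih).trans hv₀R
  -- The limsup along the orbit is an everywhere invariant version of `v₀`.
  set v' : X → ℝ := fun x => limsup (fun n => v₀ (R^[n] x)) atTop
  have hv'R : Function.Semiconj v' R id := fun x => by
    simpa [v', Function.iterate_succ_apply] using limsup_nat_add (fun n => v₀ (R^[n] x)) 1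
  have hv' : Measurable v' :=
    Measurable.limsup fun n => hv₀.measurable.comp (hR.measurable.iterate n)
  refine ⟨v', ?_, ?_⟩
  · have := MeasurableSpace.measurable_invariants_of_semiconj hv' hv'R
    rw [MeasurableSpace.invariants_id] at this
    exact this.stronglyMeasurable
  · filter_upwards [hvv₀, ae_all_iff.2 hiter] with x hx hxiter
    simp only [Function.comp_apply] at hxiter
    simp [v', hx, hxiter]

theorem integral_mul_eq_zero_of_condExp_invariants_eq_zero [IsFiniteMeasure μ]
    (hR : Measure.QuasiMeasurePreserving R μ μ) {v w : X → ℝ} (hv : AEStronglyMeasurable v μ)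
    (hvR : v ∘ R =ᵐ[μ] v) (hvw : Integrable (v * w) μ) (hw : Integrable w μ)
    (hcond : μ[w | invariants R] =ᵐ[μ] 0) :
    ∫ x, v x * w x ∂μ = 0 :=
  calc ∫ x, v x * w x ∂μ = ∫ x, (μ[v * w | invariants R]) x ∂μ :=
        (integral_condExp (invariants_le R)).symm
    _ = ∫ x, v x * (μ[w | invariants R]) x ∂μ := integral_congr_ae <|
        condExp_mul_of_aestronglyMeasurable_left
          (aestronglyMeasurable_invariants_of_comp_ae_eq hR hv hvR) hvw hw
    _ = 0 := integral_eq_zero_of_ae <| by filter_upwards [hcond] with x hx; simp [hx]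

theorem exists_memLp_two_eLpNorm_sub_coboundary_lt [IsFiniteMeasure μ]
    (hR : MeasurePreserving R μ μ) {w : X → ℝ} (hw : MemLp w 2 μ)
    (hcond : μ[w | invariants R] =ᵐ[μ] 0) {ε : ℝ≥0∞} (hε : 0 < ε) :
    ∃ g, MemLp g 2 μ ∧ eLpNorm (w - (g ∘ R - g)) 2 μ < ε := by
  have : Fact ((1 : ℝ≥0∞) ≤ 2) := ⟨one_le_two⟩
  let U : Lp ℝ 2 μ →L[ℝ] Lp ℝ 2 μ :=
    (Lp.compMeasurePreservingₗᵢ ℝ R hR).toContinuousLinearMap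
  have hUcoe (G : Lp ℝ 2 μ) : ⇑(U G) =ᵐ[μ] ⇑G ∘ R := Lp.coeFn_compMeasurePreserving G hR
  have horth : hw.toLp w ∈ (U.eqLocus 1)ᗮ := by
    refine (Submodule.mem_orthogonal _ _).2 fun V hV => ?_
    have hVR : ⇑V ∘ R =ᵐ[μ] V := (hUcoe V).symm.trans (by rw [show U V = V from hV])
    have hVw : Integrable (⇑V * w) μ := by
      refine (L2.integrable_inner (𝕜 := ℝ) V (hw.toLp w)).congr ?_
      filter_upwards [hw.coeFn_toLp] with x hx
      simp [hx, mul_comm]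
    rw [L2.inner_def, ← integral_mul_eq_zero_of_condExp_invariants_eq_zero
      hR.quasiMeasurePreserving (Lp.aestronglyMeasurable V) hVR hVw (hw.integrable one_le_two)
      hcond]
    refine integral_congr_ae ?_
    filter_upwards [hw.coeFn_toLp] with x hx
    simp [hx, mul_comm]
  obtain ⟨_, ⟨G, rfl⟩, hG⟩ := EMetric.mem_closure_iff.1
    (U.mem_closure_range_sub_self_of_mem_orthogonal_eqLocus
      (LinearIsometry.norm_toContinuousLinearMap_le _) horth) ε hε
  refine ⟨G, Lp.memLp G, lt_of_eq_of_lt (eLpNorm_congr_ae ?_) ((Lp.edist_def _ _).symm.trans_lt hG)⟩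
  filter_upwards [hw.coeFn_toLp, Lp.coeFn_sub (U G) G, hUcoe G] with x h1 h2 h3
  simp only [Pi.sub_apply, Function.comp_apply] at h2 h3 ⊢
  rw [h1, h2, h3]

theorem exists_memLp_one_eLpNorm_sub_coboundary_lt [IsProbabilityMeasure μ]
    (hR : MeasurePreserving R μ μ) {u : X → ℝ} (hu : Integrable u μ)
    (hcond : μ[u | invariants R] =ᵐ[μ] 0) {ε : ℝ≥0∞} (hε : 0 < ε) :
    ∃ g, MemLp g 1 μ ∧ eLpNorm (u - (g ∘ R - g)) 1 μ < ε := by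
  -- Approximate `u` by a simple function `v`; then `v - μ[v | invariants R]` lies in `L²` and is
  -- `2 ‖u - v‖₁`-close to `u` in `L¹`.
  obtain ⟨v, huv, -⟩ := (memLp_one_iff_integrable.2 hu).exists_simpleFunc_eLpNorm_sub_lt
    ENNReal.one_ne_top (ENNReal.half_pos (ENNReal.half_pos hε.ne').ne').ne'
  have hv2 : MemLp v 2 μ := v.memLp_of_isFiniteMeasure 2 μ
  have hvi : Integrable v μ := hv2.integrable one_le_two
  obtain ⟨g, hg, hwg⟩ := exists_memLp_two_eLpNorm_sub_coboundary_lt hR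
    (hv2.sub (hv2.condExp one_le_two)) (condExp_sub_condExp_ae_eq_zero (invariants_le R) hvi)
    (ENNReal.half_pos hε.ne')
  refine ⟨g, hg.mono_exponent one_le_two, ?_⟩
  have hcondExp_v : eLpNorm (μ[⇑v | invariants R]) 1 μ ≤ eLpNorm (u - ⇑v) 1 μ := by
    have : μ[⇑v | invariants R] =ᵐ[μ] μ[⇑v - u | invariants R] := by
      filter_upwards [condExp_sub hvi hu _, hcond] with x hx hx'
      rw [hx, Pi.sub_apply, hx', Pi.zero_apply, sub_zero]
    rw [eLpNorm_congr_ae this, eLpNorm_sub_comm]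
    exact eLpNorm_condExp_le_eLpNorm _ le_rfl
  have hw : MemLp (⇑v - μ[⇑v | invariants R] - (g ∘ R - g)) 2 μ :=
    (hv2.sub (hv2.condExp one_le_two)).sub ((hg.comp_measurePreserving hR).sub hg)
  have hsplit : u - (g ∘ R - g) = (u - ⇑v + μ[⇑v | invariants R]) +
      (⇑v - μ[⇑v | invariants R] - (g ∘ R - g)) := by
    abel
  rw [hsplit]
  calc _ ≤ eLpNorm (u - ⇑v) 1 μ + eLpNorm (μ[⇑v | invariants R]) 1 μ +
        eLpNorm (⇑v - μ[⇑v | invariants R] - (g ∘ R - g)) 2 μ :=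
        (eLpNorm_add_le ((hu.sub hvi).add integrable_condExp).1 hw.1 le_rfl).trans <|
          add_le_add (eLpNorm_add_le (hu.sub hvi).1 integrable_condExp.1 le_rfl)
            (eLpNorm_le_eLpNorm_of_exponent_le one_le_two hw.1)
    _ < ε / 2 / 2 + ε / 2 / 2 + ε / 2 :=
        ENNReal.add_lt_add (ENNReal.add_lt_add huv (hcondExp_v.trans_lt huv)) hwg
    _ = ε := by rw [ENNReal.add_halves, ENNReal.add_halves]

theorem tendsto_eLpNorm_binomialAverage_sub_condExp [IsProbabilityMeasure μ]
    (hR : MeasurePreserving R μ μ) {f : X → ℝ} (hf : Integrable f μ) :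
    Tendsto (fun n => eLpNorm (binomialAverage R f n - μ[f | invariants R]) 1 μ)
      atTop (𝓝 0) := by
  have hinv : μ[f | invariants R] ∘ R = μ[f | invariants R] :=
    MeasurableSpace.comp_eq_of_measurable_invariants stronglyMeasurable_condExp.measurable
  have hu : Integrable (f - μ[f | invariants R]) μ := hf.sub integrable_condExp
  have hsub (n : ℕ) : binomialAverage R f n - μ[f | invariants R] =
      binomialAverage R (f - μ[f | invariants R]) n := by
    rw [binomialAverage_sub, binomialAverage_of_comp_eq hinv]
  simp_rw [hsub]
  exact tendsto_eLpNorm_binomialAverage_of_forall_coboundary_lt hR le_rfl hu.1 fun ε hε =>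
    exists_memLp_one_eLpNorm_sub_coboundary_lt hR hu
      (condExp_sub_condExp_ae_eq_zero (invariants_le R) hf) hε

end BinomialAverage

/-- Let `S` and `T` be commuting invertible measure-preserving transformations of a probability
space `(X, μ)`, and `P(x, ·) := ½(δ_{Sx} + δ_{Tx})`, so that
`Pⁿf = 2⁻ⁿ Σ_{p+q=n} C(n,p) S^p T^q f` (Koopman action).  Then for every `f ∈ L¹(μ)`,
`‖Pⁿf − E(f | Λ) ∘ Tⁿ‖₁ → 0` as `n → ∞`, where `Λ` is the σ-algebra of `S⁻¹T`-invariant sets. -/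
theorem binomial_kernel_powers_tendsto_condexp
    {X : Type*} [MeasurableSpace X] (μ : Measure X) [IsProbabilityMeasure μ]
    (S T : X ≃ᵐ X) (hS : MeasurePreserving S μ μ) (hT : MeasurePreserving T μ μ)
    (hcomm : ∀ x, S (T x) = T (S x))
    (f : X → ℝ) (hf : Integrable f μ) :
    Tendsto (fun n : ℕ =>
        eLpNorm (fun x =>
            ((2 : ℝ) ^ n)⁻¹ *
              ∑ p ∈ Finset.range (n + 1), (n.choose p : ℝ) * f ((⇑S)^[p] ((⇑T)^[n - p] x)) -
            (μ[f | MeasurableSpace.invariants (fun x => S.symm (T x))]) ((⇑T)^[n] x))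
          1 μ)
      atTop (nhds 0) := by
  have hR : MeasurePreserving (fun x => T.symm (S x)) μ μ := (hT.symm T).comp hS
  have hΛ : MeasurableSpace.invariants (fun x => S.symm (T x)) =
      MeasurableSpace.invariants (fun x => T.symm (S x)) :=
    MeasurableSpace.invariants_equiv_symm (S.toEquiv.trans T.toEquiv.symm)
  have hPn (n : ℕ) : (fun x => ((2 : ℝ) ^ n)⁻¹ *
        ∑ p ∈ Finset.range (n + 1), (n.choose p : ℝ) * f ((⇑S)^[p] ((⇑T)^[n - p] x)) -
        (μ[f | MeasurableSpace.invariants (fun x => T.symm (S x))]) ((⇑T)^[n] x)) =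
      (binomialAverage (fun x => T.symm (S x)) f n -
        μ[f | MeasurableSpace.invariants (fun x => T.symm (S x))]) ∘ (⇑T)^[n] := by
    ext x
    simp only [Function.comp_apply, Pi.sub_apply, binomialAverage]
    congr 2
    exact sum_congr rfl fun p hp => congrArg (fun y => (n.choose p : ℝ) * f y)
      (S.toEquiv.iterate_apply_iterate_sub T.toEquiv hcomm (mem_range_succ_iff.1 hp) x)
  refine (tendsto_eLpNorm_binomialAverage_sub_condExp hR hf).congr fun n => ?_
  rw [hΛ, hPn, eLpNorm_comp_measurePreserving _ (hT.iterate n)]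
  exact (hf.1.binomialAverage hR.quasiMeasurePreserving n).sub integrable_condExp.1
end

section
/- In the product system example: let X := (ℤ/2)^ℤ × (ℤ/2)^ℤ with μ the product of Haar measures, ν := (½δ_{(0,0)} + ½δ_{(1,1)})^{⊗ℤ} on X, and P(x, ·) := δ_{(S×S)x} ∗ ν. Then the group homomorphism φ : X → (ℤ/2)^ℤ, φ(x₁, x₂) := x₁ − x₂, is a factor map from the kernel P to the deterministic left shift S: that is, φ_*μ is Haar measure, and for μ-a.e. x, the pushforward of P(x, ·) under φ equals δ_{S(φ(x))}. -/
/-!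
Both `μ` and `h` are determined by their cylinder probabilities: `μ` is the infinite product of
uniform measures on `ℤ/2 × ℤ/2` and `h` that of uniform measures on `ℤ/2`. Since `φ` acts
coordinatewise, `φ_* μ` is the product of the pushforwards of the uniform measure on
`ℤ/2 × ℤ/2` under `(a, b) ↦ a - b`, each of which is uniform on `ℤ/2`. On the other hand `ν` is carried by
sequences of diagonal pairs, which `φ` kills, so `φ` maps almost every point of the translate
`(S × S) x + ν` to `φ ((S × S) x) = S (φ x)`.
-/

open MeasureTheory ProbabilityTheory

namespace MeasureTheory.Measure

variable {ι : Type*} {α : ι → Type*}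

theorem cylinder_singleton_eq_pi [∀ i, Nonempty (α i)] (s : Finset ι) (g : ∀ i : s, α i) :
    ∃ a : ∀ i, α i, cylinder s {g} = (s : Set ι).pi fun i => {a i} := by
  classical
  refine ⟨fun i => if hi : i ∈ s then g ⟨i, hi⟩ else Classical.arbitrary _, ?_⟩
  ext x
  simp only [mem_cylinder, Set.mem_singleton_iff, funext_iff, Set.mem_pi, Finset.mem_coe]
  exact ⟨fun hx i hi => by rw [dif_pos hi]; exact hx ⟨i, hi⟩,
    fun hx i => by simpa [dif_pos i.2] using hx i i.2⟩

variable [∀ i, MeasurableSpace (α i)] [∀ i, Finite (α i)] [∀ i, MeasurableSingletonClass (α i)]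

theorem ext_of_cylinder_singleton {μ ν : Measure (∀ i, α i)} [IsFiniteMeasure μ]
    (h : ∀ (s : Finset ι) (g : ∀ i : s, α i), μ (cylinder s {g}) = ν (cylinder s {g})) :
    μ = ν := by
  have hcyl : ∀ (s : Finset ι) (T : Set (∀ i : s, α i)),
      μ (cylinder s T) = ν (cylinder s T) := by
    intro s T
    have hT : cylinder s T = ⋃ g ∈ (Set.toFinite T).toFinset, cylinder s {g} := by
      ext x; simp [mem_cylinder]
    have hdisj : (↑(Set.toFinite T).toFinset : Set (∀ i : s, α i)).PairwiseDisjoint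
        fun g => cylinder s {g} := fun g _ g' _ hne =>
      (Set.disjoint_singleton.2 hne).preimage _
    rw [hT, measure_biUnion_finset hdisj fun g _ => (measurableSet_singleton g).cylinder,
      measure_biUnion_finset hdisj fun g _ => (measurableSet_singleton g).cylinder]
    exact Finset.sum_congr rfl fun g _ => h s g
  refine ext_of_generate_finite _ generateFrom_measurableCylinders.symm
    isPiSystem_measurableCylinders ?_ ?_
  · rintro _ hS
    obtain ⟨s, T, -, rfl⟩ := (mem_measurableCylinders _).1 hS
    exact hcyl s T
  · simpa using hcyl ∅ Set.univ

theorem eq_infinitePi_of_pi_singleton (m : ∀ i, Measure (α i)) [∀ i, IsProbabilityMeasure (m i)]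
    {ν : Measure (∀ i, α i)}
    (h : ∀ (s : Finset ι) (a : ∀ i, α i), ν ((s : Set ι).pi fun i => {a i}) = ∏ i ∈ s, m i {a i}) :
    ν = infinitePi m := by
  have := fun i => nonempty_of_isProbabilityMeasure (m i)
  refine (ext_of_cylinder_singleton fun s g => ?_).symm
  obtain ⟨a, ha⟩ := cylinder_singleton_eq_pi s g
  rw [ha, h, infinitePi_pi _ fun i _ => measurableSet_singleton (a i)]

theorem map_map_const_add_eq_dirac {G H : Type*} [AddGroup G] [MeasurableSpace G]
    [MeasurableAdd G] [AddGroup H] [MeasurableSpace H] {ν : Measure G} [IsProbabilityMeasure ν]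
    (φ : G →+ H) (hφ : Measurable φ) (c : G) (h : ∀ᵐ y ∂ν, φ y = 0) :
    (ν.map (c + ·)).map φ = dirac (φ c) := by
  have hconst : ∀ᵐ y ∂ν, (φ ∘ (c + ·)) y = φ c := h.mono fun y hy => by simp [hy]
  rw [map_map hφ (measurable_const_add c), map_congr hconst, map_const, measure_univ, one_smul]

end MeasureTheory.Measure

theorem MeasureTheory.ae_forall_apply_mem {ι α : Type*} [Countable ι] [Countable α]
    [MeasurableSpace α] {ν : Measure (ι → α)} {S : Set α}
    (h : ∀ i, ∀ a ∉ S, ν {y | y i = a} = 0) :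
    ∀ᵐ y ∂ν, ∀ i, y i ∈ S := by
  refine ae_all_iff.2 fun i => ?_
  have : {y : ι → α | y i ∉ S} = ⋃ a ∈ Sᶜ, {y | y i = a} := by ext y; simp
  rw [ae_iff, this, measure_biUnion_null_iff (Set.to_countable _)]
  exact h i

namespace ProbabilityTheory

variable {G : Type*} [Fintype G] [MeasurableSpace G] [MeasurableSingletonClass G]

theorem uniformOn_univ_singleton (a : G) :
    uniformOn (Set.univ : Set G) {a} = (Fintype.card G : ENNReal)⁻¹ := by
  rw [uniformOn_univ, Measure.count_singleton, one_div]

theorem map_sub_uniformOn_univ [AddGroup G] :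
    (uniformOn (Set.univ : Set (G × G))).map (fun p => p.1 - p.2) = uniformOn Set.univ := by
  refine Measure.ext_of_singleton fun c => ?_
  have hfiber : (fun p : G × G => p.1 - p.2) ⁻¹' {c} =
      ↑(Finset.univ.map ⟨fun b : G => (c + b, b), fun b b' h => (Prod.ext_iff.1 h).2⟩) := by
    ext ⟨a, b⟩
    simp only [Set.mem_preimage, Set.mem_singleton_iff, sub_eq_iff_eq_add, Finset.coe_map,
      Finset.coe_univ, Set.image_univ, Set.mem_range]
    refine ⟨fun h => ⟨b, by rw [h]; rfl⟩, fun ⟨y, hy⟩ => ?_⟩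
    obtain ⟨rfl, rfl⟩ := Prod.mk.inj hy
    rfl
  have hcard : (Fintype.card G : ENNReal) ≠ 0 := by simp
  rw [Measure.map_apply (measurable_of_finite _) (measurableSet_singleton c), hfiber,
    uniformOn_univ, Measure.count_apply_finset, Finset.card_map, Finset.card_univ,
    uniformOn_univ_singleton, Fintype.card_prod, Nat.cast_mul, ENNReal.div_eq_inv_mul,
    ENNReal.mul_inv (.inl hcard) (.inr hcard), mul_assoc,
    ENNReal.inv_mul_cancel hcard (ENNReal.natCast_ne_top _), mul_one]

theorem eq_infinitePi_uniformOn_univ {ι : Type*} [Nonempty G] {ν : Measure (ι → G)}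
    (h : ∀ (s : Finset ι) (a : ι → G),
      ν ((s : Set ι).pi fun i => {a i}) = (Fintype.card G : ENNReal)⁻¹ ^ s.card) :
    ν = Measure.infinitePi fun _ => uniformOn Set.univ :=
  Measure.eq_infinitePi_of_pi_singleton _ fun s a => by
    simp only [h, uniformOn_univ_singleton, Finset.prod_const]

end ProbabilityTheory

theorem difference_factor_map_to_shift_general
    (μ ν : Measure (ℤ → ZMod 2 × ZMod 2)) [IsProbabilityMeasure ν]
    (h : Measure (ℤ → ZMod 2))
    (hμ : ∀ (s : Finset ℤ) (a : ℤ → ZMod 2 × ZMod 2),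
      μ {x | ∀ k ∈ s, x k = a k} = (4 : ENNReal)⁻¹ ^ s.card)
    (hν : ∀ (s : Finset ℤ) (a : ℤ → ZMod 2 × ZMod 2),
      ν {x | ∀ k ∈ s, x k = a k} =
        ∏ k ∈ s, (if a k = ((0 : ZMod 2), (0 : ZMod 2)) ∨ a k = (1, 1)
          then (2 : ENNReal)⁻¹ else 0))
    (hh : ∀ (s : Finset ℤ) (a : ℤ → ZMod 2),
      h {x | ∀ k ∈ s, x k = a k} = (2 : ENNReal)⁻¹ ^ s.card) :
    Measure.map (fun x : ℤ → ZMod 2 × ZMod 2 => fun k => (x k).1 - (x k).2) μ = h ∧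
    ∀ᵐ x ∂μ,
      Measure.map (fun x : ℤ → ZMod 2 × ZMod 2 => fun k => (x k).1 - (x k).2)
          (Measure.map (fun y => (fun k => x (k + 1)) + y) ν) =
        Measure.dirac (fun k => (x (k + 1)).1 - (x (k + 1)).2) := by
  refine ⟨?_, Filter.Eventually.of_forall fun x => ?_⟩
  · rw [eq_infinitePi_uniformOn_univ fun s a => (hμ s a).trans (by norm_num [ZMod.card]),
      eq_infinitePi_uniformOn_univ fun s a => (hh s a).trans (by norm_num [ZMod.card]),
      Measure.infinitePi_map_pi (f := fun _ (p : ZMod 2 × ZMod 2) => p.1 - p.2) _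
        fun _ => measurable_of_finite _, map_sub_uniformOn_univ]
  · have hsupp : ∀ a : ZMod 2 × ZMod 2, (a = (0, 0) ∨ a = (1, 1)) → a.1 - a.2 = 0 := by decide
    have hdiag : ∀ᵐ y ∂ν, ∀ k, (y k).1 - (y k).2 = 0 :=
      ae_forall_apply_mem (S := {p : ZMod 2 × ZMod 2 | p.1 - p.2 = 0}) fun k a ha => by
        have := hν {k} fun _ => a
        rw [Finset.prod_singleton, if_neg (mt (hsupp a) ha)] at this
        simpa using this
    exact Measure.map_map_const_add_eq_dirac
      (AddMonoidHom.compLeft (AddMonoidHom.fst (ZMod 2) (ZMod 2) - AddMonoidHom.snd _ _) ℤ)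
      (measurable_pi_lambda _ fun k =>
        (measurable_of_finite fun p : ZMod 2 × ZMod 2 => p.1 - p.2).comp (measurable_pi_apply k))
      _ (hdiag.mono fun y hy => funext hy)

/-- In the product system example, with `X := (ℤ/2)^ℤ × (ℤ/2)^ℤ ≅ (ℤ/2 × ℤ/2)^ℤ`, `μ` the
product of Haar measures, `ν := (½δ_{(0,0)} + ½δ_{(1,1)})^{⊗ℤ}` (both characterized by their
cylinder probabilities), and `P(x, ·) := δ_{(S×S)x} ∗ ν`: the group homomorphism
`φ(x₁, x₂) := x₁ − x₂` pushes `μ` to Haar measure on `(ℤ/2)^ℤ`, and for `μ`-a.e. `x` the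
pushforward of `P(x, ·)` under `φ` is `δ_{S(φ(x))}`; i.e. `φ` is a factor map from the kernel
`P` to the deterministic left shift `S`. -/
theorem difference_factor_map_to_shift
    (μ ν : Measure (ℤ → ZMod 2 × ZMod 2)) [IsProbabilityMeasure μ] [IsProbabilityMeasure ν]
    (h : Measure (ℤ → ZMod 2)) [IsProbabilityMeasure h]
    (hμ : ∀ (s : Finset ℤ) (a : ℤ → ZMod 2 × ZMod 2),
      μ {x | ∀ k ∈ s, x k = a k} = (4 : ENNReal)⁻¹ ^ s.card)
    (hν : ∀ (s : Finset ℤ) (a : ℤ → ZMod 2 × ZMod 2),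
      ν {x | ∀ k ∈ s, x k = a k} =
        ∏ k ∈ s, (if a k = ((0 : ZMod 2), (0 : ZMod 2)) ∨ a k = (1, 1)
          then (2 : ENNReal)⁻¹ else 0))
    (hh : ∀ (s : Finset ℤ) (a : ℤ → ZMod 2),
      h {x | ∀ k ∈ s, x k = a k} = (2 : ENNReal)⁻¹ ^ s.card) :
    Measure.map (fun x : ℤ → ZMod 2 × ZMod 2 => fun k => (x k).1 - (x k).2) μ = h ∧
    ∀ᵐ x ∂μ,
      Measure.map (fun x : ℤ → ZMod 2 × ZMod 2 => fun k => (x k).1 - (x k).2)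
          (Measure.map (fun y => (fun k => x (k + 1)) + y) ν) =
        Measure.dirac (fun k => (x (k + 1)).1 - (x (k + 1)).2) :=
  difference_factor_map_to_shift_general μ ν h hμ hν hh
end

section
/- (Deterministic σ-algebra is a factor) Let (X, μ, P) be a random p.-p. system and define Ψ_∞ := ⋂_{m≥1} {A ∈ Σ_X : P^{(m)}(x, A) ∈ {0,1} for μ-a.e. x}, where P^{(m)} is the m-step kernel. Then Ψ_∞ is a σ-algebra, and the map A ↦ {x : P(x, A) = 1} maps Ψ_∞ into Ψ_∞ (modulo μ-null sets) and preserves μ: μ({x : P(x,A) = 1}) = μ(A) for A ∈ Ψ_∞. -/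
/-!
If `P(·, A)` takes only the values `0` and `1` almost everywhere, it is a.e. the indicator of
`B = {P(·, A) = 1}`. Integrating against the invariant measure `μ` gives `μ B = μ A`. Since `μ`
is also invariant under `P^{(m)}`, for `μ`-a.e. `x` the measure `P^{(m)}(x, ·)` does not charge
the `μ`-null set where `P(·, A) ∉ {0, 1}`, so integrating against it gives
`P^{(m)}(x, B) = P^{(m+1)}(x, A)`, which is `0` or `1` for `μ`-a.e. `x`.
-/

open MeasureTheory ProbabilityTheory

/-- The `m`-step kernel `P^{(m)}`, the `m`-fold composition of `P`. -/
noncomputable def kernelPow {X : Type*} [MeasurableSpace X]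
    (P : ProbabilityTheory.Kernel X X) : ℕ → ProbabilityTheory.Kernel X X
  | 0 => ProbabilityTheory.Kernel.id
  | m + 1 => P.comp (kernelPow P m)

/-- The deterministic σ-algebra of a random p.-p. system `(X, μ, P)`:
`Ψ_∞ = ⋂_{m≥1} {A : P^{(m)}(x, A) ∈ {0,1} for μ-a.e. x}`. -/
def detSets {X : Type*} [MeasurableSpace X] (μ : Measure X)
    (P : ProbabilityTheory.Kernel X X) : Set (Set X) :=
  {A | MeasurableSet A ∧ ∀ m : ℕ, 1 ≤ m →
    ∀ᵐ x ∂μ, kernelPow P m x A = 0 ∨ kernelPow P m x A = 1}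

open scoped ENNReal

section ZeroOne

variable {X : Type*} [MeasurableSpace X] {ν : Measure X}

lemma lintegral_eq_measure_setOf_eq_one {f : X → ℝ≥0∞} (hf : Measurable f)
    (h01 : ∀ᵐ x ∂ν, f x = 0 ∨ f x = 1) : ∫⁻ x, f x ∂ν = ν {x | f x = 1} := by
  have hf_ind : f =ᵐ[ν] {x | f x = 1}.indicator 1 :=
    h01.mono fun x hx => by rcases hx with h | h <;> simp [h]
  rw [lintegral_congr_ae hf_ind, lintegral_indicator_one (s := {x | f x = 1}) (hf (measurableSet_singleton 1))]

lemma measure_compl_eq_zero_or_one [IsProbabilityMeasure ν] {A : Set X} (hA : MeasurableSet A)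
    (h : ν A = 0 ∨ ν A = 1) : ν Aᶜ = 0 ∨ ν Aᶜ = 1 := by
  rw [prob_compl_eq_one_sub hA]
  rcases h with h | h <;> simp [h]

lemma measure_iUnion_eq_zero_or_one [IsProbabilityMeasure ν] {ι : Type*} [Countable ι]
    {A : ι → Set X} (h : ∀ i, ν (A i) = 0 ∨ ν (A i) = 1) :
    ν (⋃ i, A i) = 0 ∨ ν (⋃ i, A i) = 1 := by
  by_cases h_one : ∃ i, ν (A i) = 1
  · obtain ⟨i, hi⟩ := h_one
    exact Or.inr (le_antisymm prob_le_one (hi ▸ measure_mono (Set.subset_iUnion A i)))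
  · push Not at h_one
    exact Or.inl (measure_iUnion_null fun i => (h i).resolve_right (h_one i))

end ZeroOne

section KernelPow

variable {X : Type*} [MeasurableSpace X] {μ : Measure X} {P : Kernel X X}

@[simp]
lemma kernelPow_one (P : Kernel X X) : kernelPow P 1 = P :=
  Kernel.comp_id P

instance [IsMarkovKernel P] (m : ℕ) : IsMarkovKernel (kernelPow P m) := by
  induction m with
  | zero => exact inferInstanceAs (IsMarkovKernel Kernel.id)
  | succ m ih => exact inferInstanceAs (IsMarkovKernel (P ∘ₖ kernelPow P m))

lemma kernelPow_comp_eq_self (hP : P ∘ₘ μ = μ) (m : ℕ) : kernelPow P m ∘ₘ μ = μ := by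
  induction m with
  | zero => exact Measure.id_comp
  | succ m ih => rw [kernelPow, ← Measure.comp_assoc, ih, hP]

lemma kernelPow_succ_apply (m : ℕ) (x : X) {A : Set X} (hA : MeasurableSet A) :
    kernelPow P (m + 1) x A = ∫⁻ y, P y A ∂(kernelPow P m x) :=
  Kernel.comp_apply' P (kernelPow P m) x hA

end KernelPow

section DetSets

variable {X : Type*} [MeasurableSpace X] {μ : Measure X} {P : Kernel X X} {A : Set X}

lemma ae_apply_eq_zero_or_one_of_mem_detSets (hA : A ∈ detSets μ P) :
    ∀ᵐ x ∂μ, P x A = 0 ∨ P x A = 1 := by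
  simpa using hA.2 1 le_rfl

lemma univ_mem_detSets [IsMarkovKernel P] : Set.univ ∈ detSets μ P :=
  ⟨MeasurableSet.univ, fun _ _ => Filter.Eventually.of_forall fun _ => Or.inr measure_univ⟩

lemma compl_mem_detSets [IsMarkovKernel P] (hA : A ∈ detSets μ P) : Aᶜ ∈ detSets μ P :=
  ⟨hA.1.compl, fun m hm => (hA.2 m hm).mono fun _ => measure_compl_eq_zero_or_one hA.1⟩

lemma iUnion_mem_detSets [IsMarkovKernel P] {ι : Type*} [Countable ι] {A : ι → Set X}
    (hA : ∀ i, A i ∈ detSets μ P) : ⋃ i, A i ∈ detSets μ P := by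
  refine ⟨MeasurableSet.iUnion fun i => (hA i).1, fun m hm => ?_⟩
  filter_upwards [ae_all_iff.2 fun i => (hA i).2 m hm] with x hx
  exact measure_iUnion_eq_zero_or_one hx

lemma measure_setOf_apply_eq_one (hP : P ∘ₘ μ = μ) (hA : A ∈ detSets μ P) :
    μ {x | P x A = 1} = μ A := by
  conv_rhs => rw [← hP, Measure.bind_apply hA.1 P.aemeasurable]
  exact (lintegral_eq_measure_setOf_eq_one (P.measurable_coe hA.1)
    (ae_apply_eq_zero_or_one_of_mem_detSets hA)).symm

lemma setOf_apply_eq_one_mem_detSets (hP : P ∘ₘ μ = μ) (hA : A ∈ detSets μ P) :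
    {x | P x A = 1} ∈ detSets μ P := by
  refine ⟨P.measurable_coe hA.1 (measurableSet_singleton 1), fun m hm => ?_⟩
  have h01 : ∀ᵐ x ∂μ, ∀ᵐ y ∂(kernelPow P m x), P y A = 0 ∨ P y A = 1 := by
    refine Measure.ae_ae_of_ae_comp ?_
    rw [kernelPow_comp_eq_self hP m]
    exact ae_apply_eq_zero_or_one_of_mem_detSets hA
  filter_upwards [h01, hA.2 (m + 1) (by omega)] with x hx hx_succ
  rwa [kernelPow_succ_apply m x hA.1,
    lintegral_eq_measure_setOf_eq_one (P.measurable_coe hA.1) hx] at hx_succ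

end DetSets

theorem deterministic_sigma_algebra_factor_general
    {X : Type*} [MeasurableSpace X] (μ : Measure X)
    (P : Kernel X X) [IsMarkovKernel P] (hP : μ.bind P = μ) :
    (Set.univ ∈ detSets μ P) ∧
    (∀ A ∈ detSets μ P, Aᶜ ∈ detSets μ P) ∧
    (∀ A : ℕ → Set X, (∀ i, A i ∈ detSets μ P) → (⋃ i, A i) ∈ detSets μ P) ∧
    (∀ A ∈ detSets μ P, {x | P x A = 1} ∈ detSets μ P) ∧
    (∀ A ∈ detSets μ P, μ {x | P x A = 1} = μ A) :=
  ⟨univ_mem_detSets, fun _ => compl_mem_detSets, fun _ => iUnion_mem_detSets,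
    fun _ => setOf_apply_eq_one_mem_detSets hP, fun _ => measure_setOf_apply_eq_one hP⟩

/-- The deterministic σ-algebra `Ψ_∞` of a random p.-p. system is a σ-algebra, and the map
`A ↦ {x : P(x, A) = 1}` maps `Ψ_∞` into `Ψ_∞` and preserves `μ`:
`μ({x : P(x,A) = 1}) = μ(A)` for `A ∈ Ψ_∞`. -/
theorem deterministic_sigma_algebra_factor
    {X : Type*} [MeasurableSpace X] (μ : Measure X) [IsProbabilityMeasure μ]
    (P : Kernel X X) [IsMarkovKernel P] (hP : μ.bind P = μ) :
    (Set.univ ∈ detSets μ P) ∧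
    (∀ A ∈ detSets μ P, Aᶜ ∈ detSets μ P) ∧
    (∀ A : ℕ → Set X, (∀ i, A i ∈ detSets μ P) → (⋃ i, A i) ∈ detSets μ P) ∧
    (∀ A ∈ detSets μ P, {x | P x A = 1} ∈ detSets μ P) ∧
    (∀ A ∈ detSets μ P, μ {x | P x A = 1} = μ A) :=
  deterministic_sigma_algebra_factor_general μ P hP
end
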